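/- arXiv:1808.07900 — 2 statements merged into one kernel-verified Lean document; each statement's English description precedes it below -/
import Mathlib

section
/- Let Q(x,y) = a·x² + b·x·y + c·y² be a positive definite integral binary quadratic form whose discriminant Δ = b² − 4·a·c is a fundamental discriminant. Then for every integer n ≥ 1: r(n,Q) ≤ u(Δ)·σ₀(n), where u(Δ) = 6 if Δ = −3, u(Δ) = 4 if Δ = −4, and u(Δ) = 2 otherwise. -/
/-!
A representation `(x, y)` of `n` is `g • (x', y')` with `g² ∣ n` and `(x', y')` a primitive
representation of `m = n / g²`. A primitive representation determines a root `τ` of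
`z² + bz + ac` modulo `m` (with `xτ ≡ cy` and `yτ ≡ -(ax + by)`), and two primitive
representations with the same root compose, by Brahmagupta's identity, to `m` times a solution of
`P² + bPQ + acQ² = 1`; the composition is divisible by `m` because the form is primitive, which
fundamentality forces. There are at most `u(Δ)` such solutions, so
`r(n) ≤ u(Δ) · Σ_{g² ∣ n} ρ(n / g²)`, where `ρ(m)` counts the roots modulo `m`.
By the Chinese remainder theorem this sum is multiplicative in `n`, and at `p^e` it is at most
`e + 1 = σ₀(p^e)` since `ρ(p^j) ≤ 2` for `j ≥ 1`: if `p ∤ Δ` the roots are `τ` and `-b - τ`,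
and if `p ∣ Δ` fundamentality leaves no roots modulo `p²`.
-/

/-- `σ₀(n)`: the number of positive divisors of `n`. -/
def sigma0 (n : ℕ) : ℕ := n.divisors.card

/-- A negative integer `Δ` is a fundamental discriminant if either `Δ ≡ 1 (mod 4)`
and `Δ` is squarefree, or `Δ ≡ 0 (mod 4)`, `Δ/4` is squarefree and
`Δ/4 ≡ 2 or 3 (mod 4)`. -/
def IsFundamentalDiscriminant (Δ : ℤ) : Prop :=
  Δ < 0 ∧
    ((Δ % 4 = 1 ∧ Squarefree Δ) ∨
     (Δ % 4 = 0 ∧ Squarefree (Δ / 4) ∧ (Δ / 4 % 4 = 2 ∨ Δ / 4 % 4 = 3)))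

/-- `u(Δ)`: the number of automorphs, `6` if `Δ = −3`, `4` if `Δ = −4`, else `2`. -/
def uAut (Δ : ℤ) : ℕ := if Δ = -3 then 6 else if Δ = -4 then 4 else 2

open Finset ArithmeticFunction

theorem IsFundamentalDiscriminant.not_four_mul_sq_dvd {Δ : ℤ} (hΔ : IsFundamentalDiscriminant Δ)
    {p : ℕ} (hp : p.Prime) (hpΔ : (p : ℤ) ∣ Δ) (w : ℤ) : ¬ 4 * (p : ℤ) ^ 2 ∣ w ^ 2 - Δ := by
  intro h
  have hp' : Prime (p : ℤ) := Nat.prime_iff_prime_int.mp hp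
  have hp2 : (p : ℤ) ^ 2 ∣ w ^ 2 - Δ := (Dvd.intro_left 4 rfl).trans h
  have hpw2 : (p : ℤ) ∣ w ^ 2 := by
    simpa using ((dvd_pow_self _ two_ne_zero).trans hp2).add hpΔ
  have hp2Δ : (p : ℤ) * p ∣ Δ := by
    simpa [sq] using (pow_dvd_pow_of_dvd (hp'.dvd_of_dvd_pow hpw2) 2).sub hp2
  obtain ⟨-, ⟨-, hsf⟩ | ⟨h4, hsf, hmod⟩⟩ := hΔ
  · exact hp'.not_isUnit (hsf _ hp2Δ)
  obtain ⟨D, rfl⟩ : (4 : ℤ) ∣ Δ := Int.dvd_of_emod_eq_zero h4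
  rw [Int.mul_ediv_cancel_left _ four_ne_zero] at hsf hmod
  rcases hp.eq_two_or_odd' with rfl | hodd
  · -- `w² ≡ 4D (mod 16)` would make `D` a square modulo `4`
    obtain ⟨e, he⟩ := h
    obtain ⟨v, rfl | rfl⟩ := Int.even_or_odd' w
    · obtain ⟨u, rfl | rfl⟩ := Int.even_or_odd' v
      · have : D = 4 * (u ^ 2 - e) := by push_cast at he; linarith
        omega
      · have : D = 4 * (u ^ 2 + u - e) + 1 := by push_cast at he; linarith
        omega
    · have : 4 * (v ^ 2 + v - 4 * e - D) + 1 = 0 := by push_cast at he; linear_combination he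
      omega
  · have hcop : IsCoprime ((p : ℤ) * p) 4 := by
      have : IsCoprime (p : ℤ) 2 :=
        Int.isCoprime_iff_gcd_eq_one.2 (Nat.coprime_two_right.2 hodd)
      simpa [← sq] using this.pow (m := 2) (n := 2)
    exact hp'.not_isUnit (hsf _ (hcop.dvd_of_dvd_mul_left hp2Δ))

def IsPrimitiveForm (a b c : ℤ) : Prop := ∃ r s t : ℤ, r * a + s * b + t * c = 1

theorem IsFundamentalDiscriminant.isPrimitiveForm {a b c : ℤ}
    (h : IsFundamentalDiscriminant (b ^ 2 - 4 * a * c)) : IsPrimitiveForm a b c := by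
  have hgcd : Int.gcd (Int.gcd a b) c = 1 := by
    refine Nat.eq_one_iff_not_exists_prime_dvd.2 fun p hp hpg => ?_
    have hpg : (p : ℤ) ∣ Int.gcd (Int.gcd a b) c := Int.natCast_dvd_natCast.2 hpg
    have hpab : (p : ℤ) ∣ Int.gcd a b := hpg.trans (Int.gcd_dvd_left _ _)
    obtain ⟨a', rfl⟩ := hpab.trans (Int.gcd_dvd_left _ _)
    obtain ⟨b', rfl⟩ := hpab.trans (Int.gcd_dvd_right _ _)
    obtain ⟨c', rfl⟩ := hpg.trans (Int.gcd_dvd_right _ _)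
    exact h.not_four_mul_sq_dvd hp ⟨p * b' ^ 2 - 4 * p * a' * c', by ring⟩ (p * b')
      ⟨a' * c', by ring⟩
  have e₁ := Int.gcd_eq_gcd_ab (Int.gcd a b) c
  have e₂ := Int.gcd_eq_gcd_ab a b
  rw [hgcd, Nat.cast_one] at e₁
  exact ⟨Int.gcdA a b * Int.gcdA (Int.gcd a b) c, Int.gcdB a b * Int.gcdA (Int.gcd a b) c,
    Int.gcdB (Int.gcd a b) c, by linear_combination -e₁ - Int.gcdA (Int.gcd a b) c * e₂⟩

def binForm (a b c : ℤ) (q : ℤ × ℤ) : ℤ := a * q.1 ^ 2 + b * q.1 * q.2 + c * q.2 ^ 2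

theorem binForm_smul (a b c t : ℤ) (q : ℤ × ℤ) :
    binForm a b c (t • q) = t ^ 2 * binForm a b c q := by
  simp only [binForm, Prod.smul_fst, Prod.smul_snd, smul_eq_mul]
  ring

theorem card_filter_sq_sub_mul_sq_eq_four_le {Δ : ℤ} (hΔ : Δ ≤ -3) :
    ((Icc (-2 : ℤ) 2 ×ˢ Icc (-1 : ℤ) 1).filter fun w => w.1 ^ 2 - Δ * w.2 ^ 2 = 4).card ≤
      uAut Δ := by
  unfold uAut
  split_ifs with h3 h4
  · subst h3; decide
  · subst h4; decide
  · refine (card_le_card fun w hw => ?_).trans (card_insert_le (2, 0) {(-2, 0)})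
    obtain ⟨w₁, w₂⟩ := w
    simp only [mem_filter, mem_product, mem_Icc] at hw
    obtain ⟨⟨⟨h1, h2⟩, h3, h4⟩, h5⟩ := hw
    interval_cases w₁ <;> interval_cases w₂ <;> simp_all <;> omega

theorem card_le_uAut_of_binForm_eq_one {b k : ℤ} (hΔ : b ^ 2 - 4 * k < 0) {A : Finset (ℤ × ℤ)}
    (hA : ∀ q ∈ A, binForm 1 b k q = 1) : A.card ≤ uAut (b ^ 2 - 4 * k) := by
  have hΔ3 : b ^ 2 - 4 * k ≤ -3 := by
    obtain ⟨l, rfl | rfl⟩ := Int.even_or_odd' b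
    · have : (2 * l) ^ 2 - 4 * k = 4 * (l ^ 2 - k) := by ring
      omega
    · have : (2 * l + 1) ^ 2 - 4 * k = 4 * (l ^ 2 + l - k) + 1 := by ring
      omega
  let f : ℤ × ℤ → ℤ × ℤ := fun q => (2 * q.1 + b * q.2, q.2)
  have hf : Function.Injective f := fun q q' h => by
    obtain ⟨h₁, h₂⟩ := Prod.mk.inj h
    rw [h₂] at h₁
    ext <;> linarith
  calc A.card = (A.image f).card := (card_image_of_injective A hf).symm
    _ ≤ _ := card_le_card fun w hw => ?_
    _ ≤ uAut (b ^ 2 - 4 * k) := card_filter_sq_sub_mul_sq_eq_four_le hΔ3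
  obtain ⟨q, hq, rfl⟩ := mem_image.1 hw
  have hq4 : (2 * q.1 + b * q.2) ^ 2 - (b ^ 2 - 4 * k) * q.2 ^ 2 = 4 := by
    have h1 := hA q hq
    simp only [binForm] at h1
    linear_combination 4 * h1
  simp only [mem_filter, mem_product, mem_Icc, f]
  refine ⟨⟨⟨?_, ?_⟩, ?_, ?_⟩, hq4⟩ <;> nlinarith [sq_nonneg (2 * q.1 + b * q.2), sq_nonneg q.2]

def compose (a b c : ℤ) (q₁ q : ℤ × ℤ) : ℤ × ℤ :=
  (a * q₁.1 * q.1 + b * q.1 * q₁.2 + c * q₁.2 * q.2, q₁.1 * q.2 - q.1 * q₁.2)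

theorem binForm_compose (a b c : ℤ) (q₁ q : ℤ × ℤ) :
    binForm 1 b (a * c) (compose a b c q₁ q) = binForm a b c q₁ * binForm a b c q := by
  simp only [binForm, compose]
  ring

theorem compose_injective {a b c : ℤ} {q₁ : ℤ × ℤ} (h : binForm a b c q₁ ≠ 0) :
    Function.Injective (compose a b c q₁) := by
  intro q q' hqq'
  obtain ⟨h₁, h₂⟩ := Prod.mk.inj hqq'
  ext <;> apply mul_left_cancel₀ h <;> simp only [binForm] at h ⊢
  · linear_combination q₁.1 * h₁ - c * q₁.2 * h₂
  · linear_combination q₁.2 * h₁ + (a * q₁.1 + b * q₁.2) * h₂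

theorem sq_add_mul_add_eq_zero_of_rel {R : Type*} [CommRing R] {a b c x y τ A B : R}
    (hQ : a * x ^ 2 + b * x * y + c * y ^ 2 = 0) (hAB : x * A + y * B = 1)
    (h₁ : x * τ = c * y) (h₂ : y * τ = -(a * x + b * y)) : τ ^ 2 + b * τ + a * c = 0 := by
  have hx : x ^ 2 * (τ ^ 2 + b * τ + a * c) = 0 := by
    linear_combination (x * τ + c * y + b * x) * h₁ + c * hQ
  have hy : y ^ 2 * (τ ^ 2 + b * τ + a * c) = 0 := by
    linear_combination (y * τ - a * x) * h₂ + a * hQ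
  -- `1 = (xA + yB)³` and every monomial of the cube contains `x²` or `y²`
  linear_combination (A ^ 3 * x + 3 * A ^ 2 * B * y) * hx + (3 * A * B ^ 2 * x + B ^ 3 * y) * hy
    - (τ ^ 2 + b * τ + a * c) * (1 + (x * A + y * B) + (x * A + y * B) ^ 2) * hAB

def rootOf (a b c : ℤ) (q : ℤ × ℤ) : ℤ :=
  c * q.2 * Int.gcdA q.1 q.2 - (a * q.1 + b * q.2) * Int.gcdB q.1 q.2

theorem rootOf_spec {a b c : ℤ} {m : ℕ} {q : ℤ × ℤ} (hcop : Int.gcd q.1 q.2 = 1)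
    (hQ : binForm a b c q = m) :
    (q.1 : ZMod m) * rootOf a b c q = c * q.2 ∧
      (q.2 : ZMod m) * rootOf a b c q = -(a * q.1 + b * q.2) ∧
      (rootOf a b c q : ZMod m) ^ 2 + b * rootOf a b c q + a * c = 0 := by
  have hAB : (q.1 : ZMod m) * Int.gcdA q.1 q.2 + q.2 * Int.gcdB q.1 q.2 = 1 := by
    have := congrArg (Int.cast : ℤ → ZMod m) (Int.gcd_eq_gcd_ab q.1 q.2)
    push_cast [hcop] at this
    exact this.symm
  have hQ' : (a : ZMod m) * q.1 ^ 2 + b * q.1 * q.2 + c * q.2 ^ 2 = 0 := by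
    have := congrArg (Int.cast : ℤ → ZMod m) hQ
    push_cast [binForm] at this
    rwa [ZMod.natCast_self] at this
  have h₁ : (q.1 : ZMod m) * rootOf a b c q = c * q.2 := by
    push_cast [rootOf]
    linear_combination (-(Int.gcdB q.1 q.2 : ZMod m)) * hQ' + c * q.2 * hAB
  have h₂ : (q.2 : ZMod m) * rootOf a b c q = -(a * q.1 + b * q.2) := by
    push_cast [rootOf]
    linear_combination (Int.gcdA q.1 q.2 : ZMod m) * hQ' - (a * q.1 + b * q.2) * hAB
  exact ⟨h₁, h₂, sq_add_mul_add_eq_zero_of_rel hQ' hAB h₁ h₂⟩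

theorem exists_compose_eq_smul {a b c : ℤ} (hprim : IsPrimitiveForm a b c) {m : ℕ} {τ : ZMod m}
    {q₁ q : ℤ × ℤ} (h₁₁ : (q₁.1 : ZMod m) * τ = c * q₁.2)
    (h₁₂ : (q₁.2 : ZMod m) * τ = -(a * q₁.1 + b * q₁.2)) (h₁ : (q.1 : ZMod m) * τ = c * q.2)
    (h₂ : (q.2 : ZMod m) * τ = -(a * q.1 + b * q.2)) :
    ∃ P : ℤ × ℤ, compose a b c q₁ q = (m : ℤ) • P := by
  obtain ⟨r, s, t, hrst⟩ := hprim
  have hrst' : (r : ZMod m) * a + s * b + t * c = 1 := by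
    exact_mod_cast congrArg (Int.cast : ℤ → ZMod m) hrst
  set V : ZMod m := q₁.1 * q.2 - q.1 * q₁.2
  -- `V` is killed by `a`, `b` and `c`, hence by `1 = ra + sb + tc`
  have haV : (a : ZMod m) * V = 0 := by linear_combination q.2 * h₁₂ - q₁.2 * h₂
  have hbV : (b : ZMod m) * V = 0 := by
    linear_combination q₁.1 * h₂ - q.1 * h₁₂ - q.2 * h₁₁ + q₁.2 * h₁
  have hcV : (c : ZMod m) * V = 0 := by linear_combination q.1 * h₁₁ - q₁.1 * h₁
  have hU : ((compose a b c q₁ q).1 : ZMod m) = 0 := by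
    push_cast [compose]
    linear_combination q.1 * h₁₂ - q₁.2 * h₁
  have hV : ((compose a b c q₁ q).2 : ZMod m) = 0 := by
    push_cast [compose]
    linear_combination r * haV + s * hbV + t * hcV - V * hrst'
  obtain ⟨P₁, hP₁⟩ := (ZMod.intCast_zmod_eq_zero_iff_dvd _ _).1 hU
  obtain ⟨P₂, hP₂⟩ := (ZMod.intCast_zmod_eq_zero_iff_dvd _ _).1 hV
  exact ⟨(P₁, P₂), Prod.ext hP₁ hP₂⟩

theorem card_le_uAut_of_common_root {a b c : ℤ} (hprim : IsPrimitiveForm a b c)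
    (hΔ : b ^ 2 - 4 * a * c < 0) {m : ℕ} (hm : m ≠ 0) (τ : ZMod m) {A : Finset (ℤ × ℤ)}
    (hA : ∀ q ∈ A, binForm a b c q = m ∧ (q.1 : ZMod m) * τ = c * q.2 ∧
      (q.2 : ZMod m) * τ = -(a * q.1 + b * q.2)) :
    A.card ≤ uAut (b ^ 2 - 4 * a * c) := by
  obtain rfl | ⟨q₁, hq₁⟩ := A.eq_empty_or_nonempty
  · simp
  obtain ⟨hQ₁, h₁₁, h₁₂⟩ := hA q₁ hq₁
  choose! P hP using fun q hq => exists_compose_eq_smul hprim h₁₁ h₁₂ (hA q hq).2.1 (hA q hq).2.2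
  have hm' : (m : ℤ) ≠ 0 := by exact_mod_cast hm
  have hPinj : Set.InjOn P A := fun q hq q' hq' h =>
    compose_injective (hQ₁ ▸ hm') (by rw [hP q hq, hP q' hq', h])
  rw [← card_image_of_injOn hPinj, show b ^ 2 - 4 * a * c = b ^ 2 - 4 * (a * c) by ring]
  refine card_le_uAut_of_binForm_eq_one (by linarith) fun P' hP' => ?_
  obtain ⟨q, hq, rfl⟩ := mem_image.1 hP'
  have := binForm_compose a b c q₁ q
  rw [hP q hq, binForm_smul, hQ₁, (hA q hq).1] at this
  exact mul_left_cancel₀ (pow_ne_zero 2 hm') (by linear_combination this)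

noncomputable def rootCount (b k : ℤ) : ArithmeticFunction ℕ :=
  ⟨fun m => if m = 0 then 0 else {z : ZMod m | z ^ 2 + b * z + k = 0}.ncard, if_pos rfl⟩

theorem rootCount_apply {b k : ℤ} {m : ℕ} (hm : m ≠ 0) :
    rootCount b k m = {z : ZMod m | z ^ 2 + b * z + k = 0}.ncard :=
  if_neg hm

theorem card_le_uAut_mul_rootCount_of_primitive {a b c : ℤ} (hprim : IsPrimitiveForm a b c)
    (hΔ : b ^ 2 - 4 * a * c < 0) {m : ℕ} (hm : m ≠ 0) {A : Finset (ℤ × ℤ)}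
    (hA : ∀ q ∈ A, Int.gcd q.1 q.2 = 1 ∧ binForm a b c q = m) :
    A.card ≤ uAut (b ^ 2 - 4 * a * c) * rootCount b (a * c) m := by
  have : NeZero m := ⟨hm⟩
  let ζ : ℤ × ℤ → ZMod m := fun q => rootOf a b c q
  calc A.card ≤ uAut (b ^ 2 - 4 * a * c) * (A.image ζ).card :=
        card_le_mul_card_image A _ fun τ _ => card_le_uAut_of_common_root hprim hΔ hm τ
          fun q hq => ?_
    _ ≤ uAut (b ^ 2 - 4 * a * c) * rootCount b (a * c) m := by
      gcongr
      rw [rootCount_apply hm, ← Set.ncard_coe_finset]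
      refine Set.ncard_le_ncard (fun τ hτ => ?_) (Set.toFinite _)
      obtain ⟨q, hq, rfl⟩ := mem_image.1 hτ
      obtain ⟨hcop, hQ⟩ := hA q hq
      simp only [Set.mem_ofPred_eq, ζ]
      push_cast
      exact (rootOf_spec hcop hQ).2.2
  obtain ⟨hqA, rfl⟩ := mem_filter.1 hq
  obtain ⟨hcop, hQ⟩ := hA q hqA
  exact ⟨hQ, (rootOf_spec hcop hQ).1, (rootOf_spec hcop hQ).2.1⟩

theorem gcd_smul_div_gcd (q : ℤ × ℤ) :
    (Int.gcd q.1 q.2 : ℤ) • (q.1 / Int.gcd q.1 q.2, q.2 / Int.gcd q.1 q.2) = q :=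
  Prod.ext (Int.mul_ediv_cancel' (Int.gcd_dvd_left _ _))
    (Int.mul_ediv_cancel' (Int.gcd_dvd_right _ _))

theorem card_le_uAut_mul_rootCount_of_gcd_eq {a b c : ℤ} (hprim : IsPrimitiveForm a b c)
    (hΔ : b ^ 2 - 4 * a * c < 0) {n e : ℕ} (hn : n ≠ 0) {A : Finset (ℤ × ℤ)}
    (hA : ∀ q ∈ A, binForm a b c q = n ∧ Int.gcd q.1 q.2 = e) :
    A.card ≤ uAut (b ^ 2 - 4 * a * c) * rootCount b (a * c) (n / (e * e)) := by
  obtain rfl | ⟨q₀, hq₀⟩ := A.eq_empty_or_nonempty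
  · simp
  let prim : ℤ × ℤ → ℤ × ℤ := fun q => (q.1 / e, q.2 / e)
  have hsmul : ∀ q ∈ A, (e : ℤ) • prim q = q := by
    intro q hq
    obtain ⟨-, rfl⟩ := hA q hq
    exact gcd_smul_div_gcd q
  have hQ : ∀ q ∈ A, (n : ℤ) = (e * e : ℕ) * binForm a b c (prim q) := by
    intro q hq
    rw [← (hA q hq).1]
    conv_lhs => rw [← hsmul q hq]
    rw [binForm_smul]
    push_cast
    ring
  have he : e ≠ 0 := by
    rintro rfl
    exact hn (by simpa using hQ q₀ hq₀)
  have hdvd : e * e ∣ n := Int.natCast_dvd_natCast.1 (Dvd.intro _ (hQ q₀ hq₀).symm)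
  rw [← card_image_of_injOn (f := prim) fun q hq q' hq' h => by
    rw [← hsmul q hq, ← hsmul q' hq', h]]
  refine card_le_uAut_mul_rootCount_of_primitive hprim hΔ
    ((Nat.div_ne_zero_iff_of_dvd hdvd).2 ⟨hn, by positivity⟩) fun q' hq' => ?_
  obtain ⟨q, hq, rfl⟩ := mem_image.1 hq'
  refine ⟨?_, by rw [Int.natCast_div, hQ q hq, Int.mul_ediv_cancel_left _ (by positivity)]⟩
  obtain ⟨-, rfl⟩ := hA q hq
  exact Int.gcd_div_gcd_div_gcd (Nat.pos_of_ne_zero he)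

noncomputable def squareIndicator : ArithmeticFunction ℕ :=
  ⟨fun n => if n ≠ 0 ∧ IsSquare n then 1 else 0, by simp⟩

theorem card_le_uAut_mul_squareIndicator_mul_rootCount {a b c : ℤ} (hprim : IsPrimitiveForm a b c)
    (hΔ : b ^ 2 - 4 * a * c < 0) {n : ℕ} (hn : n ≠ 0) {A : Finset (ℤ × ℤ)}
    (hA : ∀ q ∈ A, binForm a b c q = n) :
    A.card ≤ uAut (b ^ 2 - 4 * a * c) * (squareIndicator * rootCount b (a * c)) n := by
  let g : ℤ × ℤ → ℕ := fun q => Int.gcd q.1 q.2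
  rw [mul_apply, Nat.sum_divisorsAntidiagonal fun x y => squareIndicator x * rootCount b (a * c) y,
    mul_sum, card_eq_sum_card_fiberwise (f := fun q => g q * g q) (t := n.divisors) fun q hq => ?_]
  · refine sum_le_sum fun d hd => ?_
    by_cases hsq : IsSquare d
    · obtain ⟨e, rfl⟩ := hsq
      have hS : squareIndicator (e * e) = 1 := if_pos ⟨(Nat.pos_of_mem_divisors hd).ne', e, rfl⟩
      rw [hS, one_mul]
      refine card_le_uAut_mul_rootCount_of_gcd_eq hprim hΔ hn fun q hq => ?_
      obtain ⟨hqA, hqe⟩ := mem_filter.1 hq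
      exact ⟨hA q hqA, Nat.mul_self_inj.1 hqe⟩
    · rw [card_eq_zero.2 (filter_eq_empty_iff.2 fun q _ h => hsq ⟨g q, h.symm⟩)]
      exact Nat.zero_le _
  · have hQ := binForm_smul a b c (g q) (q.1 / g q, q.2 / g q)
    rw [gcd_smul_div_gcd, hA q hq] at hQ
    refine Nat.mem_divisors.2
      ⟨Int.natCast_dvd_natCast.1 ⟨binForm a b c (q.1 / g q, q.2 / g q), ?_⟩, hn⟩
    rw [hQ]
    push_cast
    ring

theorem isMultiplicative_rootCount (b k : ℤ) : IsMultiplicative (rootCount b k) := by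
  refine IsMultiplicative.iff_ne_zero.2 ⟨?_, fun {m n} hm hn hmn => ?_⟩
  · rw [rootCount_apply one_ne_zero, Set.ncard_eq_one]
    exact ⟨0, Set.eq_singleton_iff_unique_mem.2
      ⟨Subsingleton.elim _ _, fun _ _ => Subsingleton.elim _ _⟩⟩
  let e := ZMod.chineseRemainder hmn
  have he : ∀ z : ZMod (m * n), e (z ^ 2 + b * z + k) =
      ((e z).1 ^ 2 + b * (e z).1 + k, (e z).2 ^ 2 + b * (e z).2 + k) := fun z => by
    ext <;> simp
  rw [rootCount_apply (mul_ne_zero hm hn), rootCount_apply hm, rootCount_apply hn,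
    ← Nat.card_coe_set_eq, ← Nat.card_coe_set_eq, ← Nat.card_coe_set_eq, ← Nat.card_prod]
  refine Nat.card_congr ((e.toEquiv.subtypeEquiv fun z => ?_).trans Equiv.subtypeProdEquivProd)
  change _ = 0 ↔ _ = 0 ∧ _ = 0
  rw [← map_eq_zero_iff e e.injective, he, Prod.mk_eq_zero]
  rfl

theorem isMultiplicative_squareIndicator : IsMultiplicative squareIndicator := by
  refine IsMultiplicative.iff_ne_zero.2 ⟨by simp [squareIndicator], fun {m n} hm hn hmn => ?_⟩
  have key : IsSquare (m * n) ↔ IsSquare m ∧ IsSquare n := by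
    refine ⟨fun ⟨r, hr⟩ => ?_, fun ⟨hm, hn⟩ => hm.mul hn⟩
    have hu : IsUnit (gcd m n) := Nat.isUnit_iff.2 hmn
    obtain ⟨s, hs⟩ := exists_eq_pow_of_mul_eq_pow hu (k := 2) (hr.trans (sq r).symm)
    obtain ⟨t, ht⟩ := exists_eq_pow_of_mul_eq_pow (gcd_comm m n ▸ hu) (k := 2)
      ((mul_comm n m).trans (hr.trans (sq r).symm))
    exact ⟨⟨s, hs.trans (sq s)⟩, ⟨t, ht.trans (sq t)⟩⟩
  simp only [squareIndicator, coe_mk, ne_eq, mul_eq_zero, hm, hn, or_self, not_false_eq_true,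
    true_and, key]
  split_ifs <;> simp_all

theorem squareIndicator_prime_pow {p : ℕ} (hp : p.Prime) (i : ℕ) :
    squareIndicator (p ^ i) = if Even i then 1 else 0 := by
  have : IsSquare (p ^ i) ↔ Even i := by
    refine ⟨fun ⟨r, hr⟩ => ?_, fun h => h.isSquare_pow p⟩
    obtain ⟨l, -, rfl⟩ := (Nat.dvd_prime_pow hp).1 (Dvd.intro r hr.symm)
    rw [← pow_add] at hr
    exact ⟨l, Nat.pow_right_injective hp.two_le hr⟩
  simp only [squareIndicator, coe_mk, ne_eq, pow_eq_zero_iff', hp.ne_zero, false_and,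
    not_false_eq_true, true_and, this]

theorem ncard_roots_le_two {R : Type*} [CommRing R] {b k : R}
    (h : ∀ z w, z ^ 2 + b * z + k = 0 → w ^ 2 + b * w + k = 0 → w = z ∨ w = -b - z) :
    {z : R | z ^ 2 + b * z + k = 0}.ncard ≤ 2 := by
  obtain h0 | ⟨z₀, hz₀⟩ := Set.eq_empty_or_nonempty {z : R | z ^ 2 + b * z + k = 0}
  · simp [h0]
  calc _ ≤ ({z₀, -b - z₀} : Set R).ncard :=
        Set.ncard_le_ncard (fun w hw => h z₀ w hz₀ hw) (Set.toFinite _)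
    _ ≤ 2 := (Set.ncard_insert_le _ _).trans (by simp)

theorem ncard_roots_le_two_of_isDomain {R : Type*} [CommRing R] [IsDomain R] (b k : R) :
    {z : R | z ^ 2 + b * z + k = 0}.ncard ≤ 2 :=
  ncard_roots_le_two fun z w hz hw => by
    have : (w - z) * (w + z + b) = 0 := by linear_combination hw - hz
    rcases mul_eq_zero.1 this with h | h
    · left; linear_combination h
    · right; linear_combination h

theorem ZMod.isUnit_of_castHom_ne_zero {p j : ℕ} [Fact p.Prime] (hj : 0 < j) {x : ZMod (p ^ j)}
    (hx : ZMod.castHom (dvd_pow_self p hj.ne') (ZMod p) x ≠ 0) : IsUnit x := by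
  obtain ⟨n, rfl⟩ := ZMod.natCast_zmod_surjective x
  rw [map_natCast, Ne, ZMod.natCast_eq_zero_iff] at hx
  exact (ZMod.isUnit_natCast_iff_not_dvd_pow Fact.out hj).2 hx

theorem ncard_roots_zmod_prime_pow_le_two {p : ℕ} [Fact p.Prime] {b k : ℤ}
    (hΔ : ¬ (p : ℤ) ∣ b ^ 2 - 4 * k) {j : ℕ} (hj : 0 < j) :
    {z : ZMod (p ^ j) | z ^ 2 + b * z + k = 0}.ncard ≤ 2 := by
  let φ := ZMod.castHom (dvd_pow_self p hj.ne') (ZMod p)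
  refine ncard_roots_le_two fun z w hz hw => ?_
  have hprod : (w - z) * (w + z + b) = 0 := by linear_combination hw - hz
  -- the discriminant is `(2w + b)²`, so `2w + b` is a unit modulo `p`
  have hsum : φ (w - z) + φ (w + z + b) ≠ 0 := by
    rw [← map_add, show w - z + (w + z + b) = 2 * w + b by ring]
    intro h0
    apply hΔ
    rw [← ZMod.intCast_zmod_eq_zero_iff_dvd, ← map_intCast φ]
    push_cast
    rw [show (b : ZMod (p ^ j)) ^ 2 - 4 * k = (2 * w + b) ^ 2 by linear_combination -4 * hw,
      map_pow, h0, zero_pow two_ne_zero]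
  by_cases h : φ (w - z) = 0
  · left
    rw [h, zero_add] at hsum
    have := ((ZMod.isUnit_of_castHom_ne_zero hj hsum).mul_left_eq_zero).1 hprod
    linear_combination this
  · right
    have := ((ZMod.isUnit_of_castHom_ne_zero hj h).mul_right_eq_zero).1 hprod
    linear_combination this

theorem roots_zmod_prime_pow_eq_empty {b k : ℤ}
    (hfund : IsFundamentalDiscriminant (b ^ 2 - 4 * k)) {p : ℕ} (hp : p.Prime)
    (hpΔ : (p : ℤ) ∣ b ^ 2 - 4 * k) {j : ℕ} (hj : 2 ≤ j) :
    {z : ZMod (p ^ j) | z ^ 2 + b * z + k = 0} = ∅ := by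
  refine Set.eq_empty_of_forall_notMem fun z hz => ?_
  obtain ⟨t, rfl⟩ := ZMod.intCast_surjective z
  have h1 : ((p ^ j : ℕ) : ℤ) ∣ t ^ 2 + b * t + k :=
    (ZMod.intCast_zmod_eq_zero_iff_dvd _ _).1 (by push_cast; exact hz)
  have h2 : (p : ℤ) ^ 2 ∣ t ^ 2 + b * t + k :=
    (pow_dvd_pow (p : ℤ) hj).trans (by exact_mod_cast h1)
  refine hfund.not_four_mul_sq_dvd hp hpΔ (2 * t + b) ?_
  rw [show (2 * t + b) ^ 2 - (b ^ 2 - 4 * k) = 4 * (t ^ 2 + b * t + k) by ring]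
  exact mul_dvd_mul_left 4 h2

theorem rootCount_prime_pow_le_two {b k : ℤ} (hfund : IsFundamentalDiscriminant (b ^ 2 - 4 * k))
    {p : ℕ} (hp : p.Prime) {j : ℕ} (hj : 0 < j) : rootCount b k (p ^ j) ≤ 2 := by
  have : Fact p.Prime := ⟨hp⟩
  rw [rootCount_apply (pow_ne_zero j hp.ne_zero)]
  by_cases hpΔ : (p : ℤ) ∣ b ^ 2 - 4 * k
  · obtain rfl | hj2 : j = 1 ∨ 2 ≤ j := by omega
    · rw [pow_one]
      exact ncard_roots_le_two_of_isDomain _ _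
    · rw [roots_zmod_prime_pow_eq_empty hfund hp hpΔ hj2, Set.ncard_empty]
      omega
  · exact ncard_roots_zmod_prime_pow_le_two hpΔ hj

theorem sum_range_even_mul_le {f : ℕ → ℕ} (h₀ : f 0 ≤ 1) (h : ∀ j, 0 < j → f j ≤ 2) (k : ℕ) :
    ∑ i ∈ range (k + 1), (if Even i then 1 else 0) * f (k - i) ≤ k + 1 := by
  induction k using Nat.twoStepInduction with
  | zero => simpa using h₀
  | one => simpa [sum_range_succ] using h 1 one_pos
  | more k ih _ =>
    rw [sum_range_succ', sum_range_succ']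
    simp only [Nat.even_add_one, not_not, Nat.add_sub_add_right, Even.zero, not_true_eq_false,
      if_true, if_false, zero_mul, one_mul, Nat.sub_zero]
    linarith [h (k + 2) (by omega)]

theorem squareIndicator_mul_rootCount_prime_pow_le {b k : ℤ}
    (hfund : IsFundamentalDiscriminant (b ^ 2 - 4 * k)) {p : ℕ} (hp : p.Prime) (e : ℕ) :
    (squareIndicator * rootCount b k) (p ^ e) ≤ e + 1 := by
  rw [mul_apply, Nat.sum_divisorsAntidiagonal fun x y => squareIndicator x * rootCount b k y,
    Nat.sum_divisors_prime_pow hp]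
  calc _ = ∑ i ∈ range (e + 1), (if Even i then 1 else 0) * rootCount b k (p ^ (e - i)) :=
        sum_congr rfl fun i hi => by
          rw [squareIndicator_prime_pow hp,
            Nat.pow_div (Nat.lt_succ_iff.1 (mem_range.1 hi)) hp.pos]
    _ ≤ e + 1 := sum_range_even_mul_le (f := fun j => rootCount b k (p ^ j))
        (by simp [(isMultiplicative_rootCount b k).map_one])
        (fun j hj => rootCount_prime_pow_le_two hfund hp hj) e

theorem ArithmeticFunction.IsMultiplicative.le_of_prime_pow_le {f g : ArithmeticFunction ℕ}
    (hf : f.IsMultiplicative) (hg : g.IsMultiplicative)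
    (h : ∀ p k : ℕ, p.Prime → f (p ^ k) ≤ g (p ^ k)) (n : ℕ) : f n ≤ g n := by
  rcases eq_or_ne n 0 with rfl | hn
  · simp
  rw [hf.multiplicative_factorization f hn, hg.multiplicative_factorization g hn]
  exact prod_le_prod (fun _ _ => Nat.zero_le _)
    fun p hp => h _ _ (Nat.prime_of_mem_primeFactors (Nat.support_factorization n ▸ hp))

theorem squareIndicator_mul_rootCount_le_sigma0 {b k : ℤ}
    (hfund : IsFundamentalDiscriminant (b ^ 2 - 4 * k)) (n : ℕ) :
    (squareIndicator * rootCount b k) n ≤ sigma0 n := by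
  rw [sigma0, ← sigma_zero_apply]
  refine (isMultiplicative_squareIndicator.mul (isMultiplicative_rootCount b k)).le_of_prime_pow_le
    isMultiplicative_sigma (fun p e hp => ?_) n
  rw [sigma_zero_apply_prime_pow hp]
  exact squareIndicator_mul_rootCount_prime_pow_le hfund hp e

theorem stmt_7_general (a b c : ℤ)
    (hfund : IsFundamentalDiscriminant (b ^ 2 - 4 * a * c))
    (n : ℕ) (hn : 1 ≤ n) :
    {p : ℤ × ℤ | a * p.1 ^ 2 + b * p.1 * p.2 + c * p.2 ^ 2 = (n : ℤ)}.ncard ≤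
      uAut (b ^ 2 - 4 * a * c) * sigma0 n := by
  change {p : ℤ × ℤ | binForm a b c p = n}.ncard ≤ _
  obtain hfin | hinf := Set.finite_or_infinite {p : ℤ × ℤ | binForm a b c p = n}
  · rw [Set.ncard_eq_toFinset_card _ hfin]
    calc _ ≤ uAut (b ^ 2 - 4 * a * c) * (squareIndicator * rootCount b (a * c)) n :=
          card_le_uAut_mul_squareIndicator_mul_rootCount hfund.isPrimitiveForm hfund.1
            (by omega) fun q hq => hfin.mem_toFinset.1 hq
      _ ≤ uAut (b ^ 2 - 4 * a * c) * sigma0 n := by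
          gcongr
          exact squareIndicator_mul_rootCount_le_sigma0 (by rwa [← mul_assoc]) n
  · rw [hinf.ncard]
    exact Nat.zero_le _

/-- For a positive definite integral binary quadratic form `Q` of fundamental
discriminant `Δ` and every `n ≥ 1`: `r(n,Q) ≤ u(Δ)·σ₀(n)`. -/
theorem stmt_7 (a b c : ℤ) (ha : 0 < a) (hΔneg : b ^ 2 - 4 * a * c < 0)
    (hfund : IsFundamentalDiscriminant (b ^ 2 - 4 * a * c))
    (n : ℕ) (hn : 1 ≤ n) :
    {p : ℤ × ℤ | a * p.1 ^ 2 + b * p.1 * p.2 + c * p.2 ^ 2 = (n : ℤ)}.ncard ≤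
      uAut (b ^ 2 - 4 * a * c) * sigma0 n :=
  stmt_7_general a b c hfund n hn
end

section
/- Let Q be a positive definite integral ternary quadratic form with Hessian determinant q. Then there exists a ℤ-basis (u₁,u₂,u₃) of ℤ³ such that the restricted integral binary form R(x,y) := Q(x·u₁ + y·u₂) has discriminant Δ_R satisfying 0 < −Δ_R ≤ (2·q)^{2/3}. (This follows from Hermite–Rankin: γ_{2,3} = γ₃ = 2^{1/3}, so ℤ³ with Q has a rank-2 primitive sublattice of covolume at most γ₃·covol(Q)^{2/3}.) -/
/-!
With `A` the Hessian of `Q`, the restriction of `Q` to `ℤ u₁ + ℤ u₂` has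
`-Δ = (u₁ ⨯₃ u₂)ᵀ (adjugate A) (u₁ ⨯₃ u₂)`. The adjugate is positive definite of determinant
`q²`, so Minkowski's convex body theorem applied to its ellipsoids gives a nonzero `w ∈ ℤ³`
with `wᵀ (adjugate A) w ≤ (2q)^{2/3}`. Dividing `w` by the gcd of its entries only lowers this
value, and every primitive vector of `ℤ³` is `u₁ ⨯₃ u₂` for a basis `(u₁, u₂, u₃)` of `ℤ³`.
-/

open MeasureTheory Matrix
open scoped MatrixOrder ENNReal

theorem exists_ne_zero_int_mem_of_two_pow_lt_volume {ι : Type*} [Fintype ι]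
    {s : Set (ι → ℝ)} (h_symm : ∀ x ∈ s, -x ∈ s) (h_conv : Convex ℝ s)
    (h : 2 ^ Fintype.card ι < volume s) :
    ∃ w : ι → ℤ, w ≠ 0 ∧ (fun i => (w i : ℝ)) ∈ s := by
  let b := Pi.basisFun ℝ ι
  have : Countable (Submodule.span ℤ (Set.range b)) := inferInstance
  have hvolF : volume (ZSpan.fundamentalDomain b) = 1 := by
    simp [b, ZSpan.fundamentalDomain_pi_basisFun, Real.volume_pi_Ico]
  obtain ⟨⟨x, hxL⟩, hx0, hxs⟩ := exists_ne_zero_mem_lattice_of_measure_mul_two_pow_lt_measure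
    (ZSpan.isAddFundamentalDomain' b volume) h_symm h_conv
    (by rwa [hvolF, one_mul, Module.finrank_fintype_fun_eq_card])
  have hint : ∀ i, ∃ z : ℤ, (z : ℝ) = x i := fun i => by
    simpa [b] using (b.mem_span_iff_repr_mem ℤ x).mp hxL i
  choose w hw using hint
  have hx : (fun i => (w i : ℝ)) = x := funext hw
  refine ⟨w, fun h0 => hx0 ?_, hx ▸ hxs⟩
  ext i
  simp [← hx, h0]

namespace Matrix

section PosDef

variable {ι : Type*} [Fintype ι] [DecidableEq ι]

theorem setOf_dotProduct_transpose_mul_self_mulVec_le (B : Matrix ι ι ℝ) {R : ℝ} (hR : 0 ≤ R) :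
    {x : ι → ℝ | x ⬝ᵥ (Bᵀ * B) *ᵥ x ≤ R ^ 2} =
      toLin' B ⁻¹' (WithLp.toLp 2 ⁻¹' Metric.closedBall 0 R) := by
  ext x
  have hB : x ⬝ᵥ (Bᵀ * B) *ᵥ x = ‖WithLp.toLp 2 (B *ᵥ x)‖ ^ 2 := by
    rw [EuclideanSpace.norm_sq_eq, ← mulVec_mulVec, dotProduct_mulVec, vecMul_transpose]
    simp [dotProduct, sq]
  simp [hB, sq_le_sq₀ (norm_nonneg _) hR]

theorem PosDef.exists_eq_transpose_mul_self {M : Matrix ι ι ℝ} (hM : M.PosDef) :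
    ∃ B : Matrix ι ι ℝ, M = Bᵀ * B := by
  obtain ⟨B, rfl⟩ := CStarAlgebra.nonneg_iff_eq_star_mul_self.mp hM.posSemidef.nonneg
  exact ⟨B, by simp [star_eq_conjTranspose]⟩

theorem PosDef.convex_setOf_dotProduct_mulVec_le {M : Matrix ι ι ℝ} (hM : M.PosDef) {R : ℝ}
    (hR : 0 ≤ R) : Convex ℝ {x : ι → ℝ | x ⬝ᵥ M *ᵥ x ≤ R ^ 2} := by
  obtain ⟨B, rfl⟩ := hM.exists_eq_transpose_mul_self
  rw [setOf_dotProduct_transpose_mul_self_mulVec_le B hR]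
  exact ((convex_closedBall _ _).linear_preimage
    (WithLp.linearEquiv 2 ℝ (ι → ℝ)).symm.toLinearMap).linear_preimage _

theorem PosDef.volume_setOf_dotProduct_mulVec_le {M : Matrix ι ι ℝ} (hM : M.PosDef) {R : ℝ}
    (hR : 0 ≤ R) :
    volume {x : ι → ℝ | x ⬝ᵥ M *ᵥ x ≤ R ^ 2} =
      ENNReal.ofReal (√M.det)⁻¹ * volume (Metric.closedBall (0 : EuclideanSpace ℝ ι) R) := by
  obtain ⟨B, rfl⟩ := hM.exists_eq_transpose_mul_self
  have hdet : (Bᵀ * B).det = B.det ^ 2 := by rw [det_mul, det_transpose, sq]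
  have hB : LinearMap.det (toLin' B) ≠ 0 := by
    rw [LinearMap.det_toLin']
    exact fun h => (hM.det_pos.trans_eq (by rw [hdet, h]; ring)).false
  rw [setOf_dotProduct_transpose_mul_self_mulVec_le B hR, Measure.addHaar_preimage_linearMap _ hB,
    (PiLp.volume_preserving_toLp ι).measure_preimage measurableSet_closedBall.nullMeasurableSet,
    LinearMap.det_toLin', hdet, Real.sqrt_sq_eq_abs, abs_inv]

theorem PosDef.exists_ne_zero_int_dotProduct_mulVec_le {M : Matrix ι ι ℝ} (hM : M.PosDef)
    {R : ℝ} (hR : 0 ≤ R)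
    (hvol : 2 ^ Fintype.card ι * ENNReal.ofReal √M.det <
      volume (Metric.closedBall (0 : EuclideanSpace ℝ ι) R)) :
    ∃ w : ι → ℤ, w ≠ 0 ∧ (fun i => (w i : ℝ)) ⬝ᵥ M *ᵥ (fun i => (w i : ℝ)) ≤ R ^ 2 := by
  refine exists_ne_zero_int_mem_of_two_pow_lt_volume (fun x hx => ?_)
    (hM.convex_setOf_dotProduct_mulVec_le hR) ?_
  · simpa [mulVec_neg] using hx
  · have hdet : 0 < √M.det := Real.sqrt_pos.mpr hM.det_pos
    rw [hM.volume_setOf_dotProduct_mulVec_le hR, ENNReal.ofReal_inv_of_pos hdet,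
      ← ENNReal.div_eq_inv_mul, ENNReal.lt_div_iff_mul_lt (.inl (ENNReal.ofReal_pos.mpr hdet).ne')
        (.inl ENNReal.ofReal_ne_top)]
    exact hvol

theorem PosDef.adjugate {M : Matrix ι ι ℝ} (hM : M.PosDef) : M.adjugate.PosDef := by
  have h : M.adjugate = M.det • M⁻¹ := by
    rw [inv_def, smul_smul, Ring.inverse_eq_inv, mul_inv_cancel₀ hM.det_pos.ne', one_smul]
  rw [h]
  exact hM.inv.smul hM.det_pos

end PosDef

theorem PosDef.exists_ne_zero_int_dotProduct_mulVec_le_fin_three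
    {M : Matrix (Fin 3) (Fin 3) ℝ} (hM : M.PosDef) :
    ∃ w : Fin 3 → ℤ, w ≠ 0 ∧
      (fun i => (w i : ℝ)) ⬝ᵥ M *ᵥ (fun i => (w i : ℝ)) ≤ (2 * √M.det) ^ (2 / 3 : ℝ) := by
  have hD : 0 < 2 * √M.det := by have := Real.sqrt_pos.mpr hM.det_pos; positivity
  set R := (2 * √M.det) ^ (1 / 3 : ℝ)
  have hR : 0 < R := by positivity
  have hRpow (n : ℕ) : R ^ n = (2 * √M.det) ^ (n / 3 : ℝ) := by
    rw [← Real.rpow_natCast, ← Real.rpow_mul hD.le]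
    ring_nf
  rw [show (2 / 3 : ℝ) = (2 : ℕ) / 3 by norm_num, ← hRpow]
  -- the ball of radius `R` has volume `(8π / 3) √(det M) > 8 √(det M)`
  refine hM.exists_ne_zero_int_dotProduct_mulVec_le hR.le ?_
  rw [EuclideanSpace.volume_closedBall_fin_three, ← ENNReal.ofReal_pow hR.le,
    ← ENNReal.ofReal_mul (by positivity), hRpow, Fintype.card_fin,
    show ((2 : ℝ≥0∞) ^ 3) = ENNReal.ofReal 8 by norm_num, ← ENNReal.ofReal_mul (by norm_num),
    ENNReal.ofReal_lt_ofReal_iff (by positivity)]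
  norm_num
  nlinarith [Real.pi_gt_three]

-- `(A u) ⨯₃ (A v) = (adjugate A)ᵀ *ᵥ (u ⨯₃ v)` combined with the Binet–Cauchy identity.
theorem cross_dotProduct_adjugate_mulVec_cross {R : Type*} [CommRing R]
    (A : Matrix (Fin 3) (Fin 3) R) (u v : Fin 3 → R) :
    (u ⨯₃ v) ⬝ᵥ A.adjugate *ᵥ (u ⨯₃ v) =
      (u ⬝ᵥ A *ᵥ u) * (v ⬝ᵥ A *ᵥ v) - (u ⬝ᵥ A *ᵥ v) * (v ⬝ᵥ A *ᵥ u) := by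
  simp [adjugate_fin_three, cross_apply, dotProduct, mulVec, Fin.sum_univ_three]
  ring

section IsSymm

variable {R n : Type*} [CommSemiring R] [Fintype n] {A : Matrix n n R}

theorem IsSymm.dotProduct_mulVec_comm (hA : A.IsSymm) (u v : n → R) :
    v ⬝ᵥ A *ᵥ u = u ⬝ᵥ A *ᵥ v := by
  rw [dotProduct_mulVec, ← mulVec_transpose, hA.eq, dotProduct_comm]

theorem IsSymm.dotProduct_mulVec_add_smul (hA : A.IsSymm) (u v : n → R) (x y : R) :
    (x • u + y • v) ⬝ᵥ A *ᵥ (x • u + y • v) =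
      (u ⬝ᵥ A *ᵥ u) * x ^ 2 + 2 * (u ⬝ᵥ A *ᵥ v) * x * y + (v ⬝ᵥ A *ᵥ v) * y ^ 2 := by
  simp only [mulVec_add, mulVec_smul, add_dotProduct, dotProduct_add, smul_dotProduct,
    dotProduct_smul, smul_eq_mul, hA.dotProduct_mulVec_comm u v]
  ring

end IsSymm

end Matrix

theorem exists_isUnit_det_smul_cross_eq {w : Fin 3 → ℤ} (hw : w ≠ 0) :
    ∃ (g : ℤ) (u₁ u₂ u₃ : Fin 3 → ℤ),
      g ≠ 0 ∧ g • u₁ ⨯₃ u₂ = w ∧ IsUnit (det (of ![u₁, u₂, u₃])) := by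
  -- `w = g • (a, h * b₁, h * b₂)` with `x * b₁ + y * b₂ = 1` and `s * a + t * h = 1`.
  obtain ⟨b₁, b₂, hb₁, hb₂, hb⟩ := extract_gcd (w 1) (w 2)
  generalize gcd (w 1) (w 2) = G at hb₁ hb₂
  obtain ⟨a, h, ha, hh, hah⟩ := extract_gcd (w 0) G
  generalize gcd (w 0) G = g at ha hh
  obtain ⟨x, y, hxy⟩ := (gcd_isUnit_iff _ _).mp hb
  obtain ⟨s, t, hst⟩ := (gcd_isUnit_iff _ _).mp hah
  refine ⟨g, ![-h, x * a, y * a], ![0, -b₂, b₁], ![s, x * t, y * t], fun hg => hw ?_, ?_, ?_⟩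
  · ext i
    fin_cases i <;> simp [ha, hb₁, hb₂, hh, hg]
  · ext i
    fin_cases i <;> simp [cross_apply]
    · linear_combination (g * a) * hxy - ha
    · linear_combination -hb₁ - b₁ * hh
    · linear_combination -hb₂ - b₂ * hh
  · have hdet : det (of ![![-h, x * a, y * a], ![0, -b₂, b₁], ![s, x * t, y * t]]) = 1 := by
      simp [det_fin_three]
      linear_combination (s * a + t * h) * hxy + hst
    exact hdet ▸ isUnit_one

theorem exists_isUnit_det_cross_dotProduct_adjugate_mulVec_le (A : Matrix (Fin 3) (Fin 3) ℤ)
    (hA : (A.map (Int.cast : ℤ → ℝ)).PosDef) :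
    ∃ u₁ u₂ u₃ : Fin 3 → ℤ, IsUnit (det (of ![u₁, u₂, u₃])) ∧
      0 < (u₁ ⨯₃ u₂) ⬝ᵥ A.adjugate *ᵥ (u₁ ⨯₃ u₂) ∧
      (((u₁ ⨯₃ u₂) ⬝ᵥ A.adjugate *ᵥ (u₁ ⨯₃ u₂) : ℤ) : ℝ) ≤ (2 * A.det) ^ (2 / 3 : ℝ) := by
  let f := Int.castRingHom ℝ
  have hcast (v : Fin 3 → ℤ) :
      ((v ⬝ᵥ A.adjugate *ᵥ v : ℤ) : ℝ) = (f ∘ v) ⬝ᵥ (A.map f).adjugate *ᵥ (f ∘ v) := by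
    rw [← f.mapMatrix_apply, ← RingHom.map_adjugate, ← eq_intCast f, f.map_dotProduct]
    congr 1
    ext i
    exact f.map_mulVec _ _ i
  have hM : (A.map f).adjugate.PosDef := hA.adjugate
  have hdet : √(A.map f).adjugate.det = A.det := by
    rw [det_adjugate, Fintype.card_fin, ← f.mapMatrix_apply, ← RingHom.map_det]
    exact Real.sqrt_sq (hA.det_pos.le.trans_eq (f.map_det A).symm)
  obtain ⟨w, hw0, hw⟩ := hM.exists_ne_zero_int_dotProduct_mulVec_le_fin_three
  obtain ⟨g, u₁, u₂, u₃, hg, rfl, hunit⟩ := exists_isUnit_det_smul_cross_eq hw0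
  set c := u₁ ⨯₃ u₂
  have hpos : 0 < c ⬝ᵥ A.adjugate *ᵥ c := by
    have hc0 : c ≠ 0 := fun h => hw0 (by rw [h, smul_zero])
    have hc : f ∘ c ≠ 0 := fun h => hc0 (by ext i; simpa [f] using congr_fun h i)
    have := hM.dotProduct_mulVec_pos hc
    rw [star_trivial, ← hcast] at this
    exact_mod_cast this
  refine ⟨u₁, u₂, u₃, hunit, hpos, ?_⟩
  calc ((c ⬝ᵥ A.adjugate *ᵥ c : ℤ) : ℝ) ≤ (((g • c) ⬝ᵥ A.adjugate *ᵥ (g • c) : ℤ) : ℝ) := by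
        rw [mulVec_smul, dotProduct_smul, smul_dotProduct, smul_eq_mul, smul_eq_mul, ← mul_assoc, ← sq]
        exact_mod_cast le_mul_of_one_le_left hpos.le ((one_le_sq_iff_one_le_abs g).mpr (Int.one_le_abs hg))
    _ ≤ (2 * A.det) ^ (2 / 3 : ℝ) := by
        rw [hcast, ← hdet]
        exact hw

/-- (Hermite–Rankin) Let `Q` be a positive definite integral ternary quadratic
form with Hessian determinant `q`.  Then there is a `ℤ`-basis `(u₁,u₂,u₃)` of
`ℤ³` such that the restricted integral binary form `R(x,y) = Q(x·u₁ + y·u₂)`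
has discriminant `Δ_R` with `0 < −Δ_R ≤ (2q)^{2/3}`. -/
theorem stmt_10 (a11 a12 a13 a22 a23 a33 : ℤ)
    (Q : (Fin 3 → ℤ) → ℤ)
    (hQ : ∀ v : Fin 3 → ℤ, Q v =
      a11 * v 0 ^ 2 + a22 * v 1 ^ 2 + a33 * v 2 ^ 2 +
      a12 * v 0 * v 1 + a13 * v 0 * v 2 + a23 * v 1 * v 2)
    (hpos : ∀ v : Fin 3 → ℝ, v ≠ 0 →
      0 < (a11 : ℝ) * v 0 ^ 2 + (a22 : ℝ) * v 1 ^ 2 + (a33 : ℝ) * v 2 ^ 2 +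
        (a12 : ℝ) * v 0 * v 1 + (a13 : ℝ) * v 0 * v 2 + (a23 : ℝ) * v 1 * v 2)
    (q : ℤ)
    (hq : q = Matrix.det
      !![2 * a11, a12, a13; a12, 2 * a22, a23; a13, a23, 2 * a33]) :
    ∃ (u₁ u₂ u₃ : Fin 3 → ℤ) (RA RB RC : ℤ),
      IsUnit (Matrix.det (Matrix.of fun i j => ![u₁, u₂, u₃] j i)) ∧
      (∀ x y : ℤ, Q (x • u₁ + y • u₂) = RA * x ^ 2 + RB * x * y + RC * y ^ 2) ∧
      0 < -(RB ^ 2 - 4 * RA * RC) ∧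
      ((-(RB ^ 2 - 4 * RA * RC) : ℤ) : ℝ) ≤ (2 * (q : ℝ)) ^ ((2 : ℝ) / 3) := by
  set A : Matrix (Fin 3) (Fin 3) ℤ := !![2 * a11, a12, a13; a12, 2 * a22, a23; a13, a23, 2 * a33]
  have hA : A.IsSymm := by ext i j; fin_cases i <;> fin_cases j <;> rfl
  have hQA (v : Fin 3 → ℤ) : 2 * Q v = v ⬝ᵥ A *ᵥ v := by
    simp [hQ, A, dotProduct, mulVec, Fin.sum_univ_three]
    ring
  have hApos : (A.map (Int.cast : ℤ → ℝ)).PosDef := by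
    refine .of_dotProduct_mulVec_pos (isHermitian_iff_isSymm.mpr (hA.map _)) fun x hx => ?_
    have := hpos x hx
    simp [A, dotProduct, mulVec, Fin.sum_univ_three]
    linarith
  obtain ⟨u₁, u₂, u₃, hunit, hdisc_pos, hdisc_le⟩ :=
    exists_isUnit_det_cross_dotProduct_adjugate_mulVec_le A hApos
  have hdisc : -((u₁ ⬝ᵥ A *ᵥ u₂) ^ 2 - 4 * Q u₁ * Q u₂) =
      (u₁ ⨯₃ u₂) ⬝ᵥ A.adjugate *ᵥ (u₁ ⨯₃ u₂) := by
    rw [cross_dotProduct_adjugate_mulVec_cross, ← hQA, ← hQA, hA.dotProduct_mulVec_comm]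
    ring
  refine ⟨u₁, u₂, u₃, Q u₁, u₁ ⬝ᵥ A *ᵥ u₂, Q u₂, by rwa [← det_transpose] at hunit,
    fun x y => ?_, hdisc ▸ hdisc_pos, hdisc ▸ hq ▸ hdisc_le⟩
  have := hA.dotProduct_mulVec_add_smul u₁ u₂ x y
  rw [← hQA, ← hQA, ← hQA] at this
  exact mul_left_cancel₀ two_ne_zero (by linear_combination this)
end
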